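/- For m = 1, 2 let β_m, θ_m ∈ ℝᵖ, let W_m : Ω → (real n×p matrices) have rows w_{m,1}, …, w_{m,n} that are mutually independent ℝᵖ-valued random vectors with E[w_{m,i}] = 0 and E[w_{m,i} w_{m,i}ᵀ] = Σ_{W_m}; assume W₁, W₂ are mutually independent and independent of (ε₁, ε₂), where ε₁, ε₂ : Ω → ℝⁿ are square-integrable with E[ε_m] = 0 and E[ε_m ε_{m'}ᵀ] = Σ_{mm'}. With y_m = X_m β_m + W_m θ_m + ε_m, y = y₁ + y₂, ŷ = H y, ŷ* = H₁ y₁ + H₂ y₂, one has E[‖y − ŷ‖²] − E[‖y − ŷ*‖²] = Tr{(H₁ − H)Σ₁₁} + Tr{(H₂ − H)Σ₂₂} + 2Tr{(H₁ + H₂ − H)Σ₁₂} − 2Tr{H₂H₁Σ₁₂} − p·θ₁ᵀΣ_{W₁}θ₁ − p·θ₂ᵀΣ_{W₂}θ₂. -/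

import Mathlib

/-!
Write `y_m = X_m β_m + z_m` with noise `z_m = W_m θ_m + ε_m`. Since `H X_m = X_m` and
`H_m X_m = X_m`, the two residuals are `(I - H)(z₁ + z₂)` and `(I - H₁) z₁ + (I - H₂) z₂`, so both
training errors are quadratic forms in the noise. Their expectations are traces against the second
moments `E[z_m z_{m'}ᵀ] = δ_{mm'} (θ_mᵀ Σ_{W_m} θ_m) I + Σ_{mm'}`: the rows of `W_m` are centred and
independent, and independent of everything else. What remains is trace algebra with
`(I - Q)ᵀ(I - Q) = I - Q` for the symmetric idempotents `Q = H, H₁, H₂` and with `Tr H = 2p`,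
`Tr H_m = p`.
-/

open Matrix MeasureTheory ProbabilityTheory
open scoped BigOperators

/-- The hat matrix `H_A = A (AᵀA)⁻¹ Aᵀ` of a design matrix `A`. -/
noncomputable def hatMat {n : ℕ} {q : Type*} [Fintype q] [DecidableEq q]
    (A : Matrix (Fin n) q ℝ) : Matrix (Fin n) (Fin n) ℝ :=
  A * (Aᵀ * A)⁻¹ * Aᵀ

section HatMatrix

variable {n : ℕ} {q : Type*} [Fintype q] [DecidableEq q] {A : Matrix (Fin n) q ℝ}

theorem hatMat_transpose (A : Matrix (Fin n) q ℝ) : (hatMat A)ᵀ = hatMat A := by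
  simp only [hatMat, transpose_mul, transpose_transpose, transpose_nonsing_inv, Matrix.mul_assoc]

theorem hatMat_mul_self (h : IsUnit (Aᵀ * A)) : hatMat A * A = A := by
  rw [hatMat, Matrix.mul_assoc, Matrix.mul_assoc,
    Matrix.nonsing_inv_mul _ ((isUnit_iff_isUnit_det _).mp h), Matrix.mul_one]

theorem isIdempotentElem_hatMat (h : IsUnit (Aᵀ * A)) : IsIdempotentElem (hatMat A) := by
  unfold IsIdempotentElem
  conv_lhs => enter [2]; rw [hatMat]
  rw [← Matrix.mul_assoc, ← Matrix.mul_assoc, hatMat_mul_self h, hatMat]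

theorem trace_hatMat (h : IsUnit (Aᵀ * A)) : (hatMat A).trace = Fintype.card q := by
  rw [hatMat, Matrix.mul_assoc, trace_mul_comm, Matrix.mul_assoc,
    Matrix.nonsing_inv_mul _ ((isUnit_iff_isUnit_det _).mp h), trace_one]

theorem one_sub_hatMat_transpose_mul_self (h : IsUnit (Aᵀ * A)) :
    (1 - hatMat A)ᵀ * (1 - hatMat A) = 1 - hatMat A := by
  rw [transpose_sub, transpose_one, hatMat_transpose, (isIdempotentElem_hatMat h).one_sub.eq]

theorem trace_one_sub_hatMat_mul_smul_one_add (h : IsUnit (Aᵀ * A)) (σ : ℝ)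
    (S : Matrix (Fin n) (Fin n) ℝ) :
    ((1 - hatMat A) * (σ • 1 + S)).trace
      = σ * (n - Fintype.card q) + ((1 - hatMat A) * S).trace := by
  rw [Matrix.mul_add, trace_add, Matrix.mul_smul, Matrix.mul_one, trace_smul, trace_sub,
    trace_one, trace_hatMat h, Fintype.card_fin, smul_eq_mul]

end HatMatrix

theorem add_sub_mulVec_add_of_mul_eq {m k : Type*} [Fintype m] [Fintype k] [DecidableEq m]
    {H : Matrix m m ℝ} {X : Matrix m k ℝ} (hHX : H * X = X) (β : k → ℝ) (z : m → ℝ) :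
    (X *ᵥ β + z) - H *ᵥ (X *ᵥ β + z) = (1 - H) *ᵥ z := by
  rw [mulVec_add, mulVec_mulVec, hHX, sub_mulVec, one_mulVec]
  abel

theorem add_add_sub_mulVec_of_mul_fromCols_eq {m k₀ k₁ : Type*} [Fintype m] [Fintype k₀]
    [Fintype k₁] [DecidableEq m] {H : Matrix m m ℝ} {X₀ : Matrix m k₀ ℝ} {X₁ : Matrix m k₁ ℝ}
    (hHX : H * fromCols X₀ X₁ = fromCols X₀ X₁) (β₀ : k₀ → ℝ) (β₁ : k₁ → ℝ) (z₀ z₁ : m → ℝ) :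
    (X₀ *ᵥ β₀ + z₀ + (X₁ *ᵥ β₁ + z₁)) - H *ᵥ (X₀ *ᵥ β₀ + z₀ + (X₁ *ᵥ β₁ + z₁))
      = (1 - H) *ᵥ z₀ + (1 - H) *ᵥ z₁ := by
  have hy : X₀ *ᵥ β₀ + z₀ + (X₁ *ᵥ β₁ + z₁) = fromCols X₀ X₁ *ᵥ Sum.elim β₀ β₁ + (z₀ + z₁) := by
    rw [fromCols_mulVec_sumElim]
    abel
  rw [hy, add_sub_mulVec_add_of_mul_eq hHX, mulVec_add]

theorem add_add_sub_mulVec_add_mulVec_of_mul_eq {m k₀ k₁ : Type*} [Fintype m] [Fintype k₀]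
    [Fintype k₁] [DecidableEq m] {H₀ H₁ : Matrix m m ℝ} {X₀ : Matrix m k₀ ℝ}
    {X₁ : Matrix m k₁ ℝ} (h₀ : H₀ * X₀ = X₀) (h₁ : H₁ * X₁ = X₁) (β₀ : k₀ → ℝ) (β₁ : k₁ → ℝ)
    (z₀ z₁ : m → ℝ) :
    (X₀ *ᵥ β₀ + z₀ + (X₁ *ᵥ β₁ + z₁)) - (H₀ *ᵥ (X₀ *ᵥ β₀ + z₀) + H₁ *ᵥ (X₁ *ᵥ β₁ + z₁))
      = (1 - H₀) *ᵥ z₀ + (1 - H₁) *ᵥ z₁ := by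
  rw [← add_sub_mulVec_add_of_mul_eq h₀ β₀ z₀, ← add_sub_mulVec_add_of_mul_eq h₁ β₁ z₁]
  abel

theorem trace_residual_forms_sub {n p : ℕ} {X₀ X₁ : Matrix (Fin n) (Fin p) ℝ}
    (h₀ : IsUnit (X₀ᵀ * X₀)) (h₁ : IsUnit (X₁ᵀ * X₁))
    (h : IsUnit ((fromCols X₀ X₁)ᵀ * fromCols X₀ X₁)) (σ₀ σ₁ : ℝ)
    (S₀₀ S₀₁ S₁₁ : Matrix (Fin n) (Fin n) ℝ) :
    ((1 - hatMat (fromCols X₀ X₁))ᵀ * (1 - hatMat (fromCols X₀ X₁)) * (σ₀ • 1 + S₀₀)).trace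
        + 2 * ((1 - hatMat (fromCols X₀ X₁))ᵀ * (1 - hatMat (fromCols X₀ X₁)) * S₀₁).trace
        + ((1 - hatMat (fromCols X₀ X₁))ᵀ * (1 - hatMat (fromCols X₀ X₁)) * (σ₁ • 1 + S₁₁)).trace
      - (((1 - hatMat X₀)ᵀ * (1 - hatMat X₀) * (σ₀ • 1 + S₀₀)).trace
        + 2 * ((1 - hatMat X₁)ᵀ * (1 - hatMat X₀) * S₀₁).trace
        + ((1 - hatMat X₁)ᵀ * (1 - hatMat X₁) * (σ₁ • 1 + S₁₁)).trace)
    = ((hatMat X₀ - hatMat (fromCols X₀ X₁)) * S₀₀).trace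
        + ((hatMat X₁ - hatMat (fromCols X₀ X₁)) * S₁₁).trace
        + 2 * ((hatMat X₀ + hatMat X₁ - hatMat (fromCols X₀ X₁)) * S₀₁).trace
        - 2 * (hatMat X₁ * hatMat X₀ * S₀₁).trace - p * σ₀ - p * σ₁ := by
  have hT : (1 - hatMat X₁)ᵀ = 1 - hatMat X₁ := by
    rw [transpose_sub, transpose_one, hatMat_transpose]
  rw [one_sub_hatMat_transpose_mul_self h, one_sub_hatMat_transpose_mul_self h₀,
    one_sub_hatMat_transpose_mul_self h₁, hT, trace_one_sub_hatMat_mul_smul_one_add h,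
    trace_one_sub_hatMat_mul_smul_one_add h, trace_one_sub_hatMat_mul_smul_one_add h₀,
    trace_one_sub_hatMat_mul_smul_one_add h₁]
  simp only [Fintype.card_sum, Fintype.card_fin, sub_mul, add_mul, mul_sub, one_mul, mul_one,
    trace_sub, trace_add, Matrix.mul_assoc]
  push_cast
  ring

section SecondMoment

variable {Ω ι κ : Type*} [MeasurableSpace Ω] {P : Measure Ω}

noncomputable def secondMoment (P : Measure Ω) (f : Ω → ι → ℝ) (g : Ω → κ → ℝ) :
    Matrix ι κ ℝ :=
  of fun a b => ∫ ω, f ω a * g ω b ∂P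

theorem secondMoment_transpose (f : Ω → ι → ℝ) (g : Ω → κ → ℝ) :
    (secondMoment P f g)ᵀ = secondMoment P g f := by
  ext a b
  simp only [secondMoment, transpose_apply, of_apply, mul_comm]

theorem secondMoment_add_add {f f' : Ω → ι → ℝ} {g g' : Ω → κ → ℝ}
    (hf : ∀ a, MemLp (fun ω => f ω a) 2 P) (hf' : ∀ a, MemLp (fun ω => f' ω a) 2 P)
    (hg : ∀ b, MemLp (fun ω => g ω b) 2 P) (hg' : ∀ b, MemLp (fun ω => g' ω b) 2 P) :
    secondMoment P (fun ω => f ω + f' ω) (fun ω => g ω + g' ω)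
      = secondMoment P f g + secondMoment P f' g + secondMoment P f g'
        + secondMoment P f' g' := by
  ext a b
  have i₁ : Integrable (fun ω => f ω a * g ω b) P := (hf a).integrable_mul (hg b)
  have i₂ : Integrable (fun ω => f' ω a * g ω b) P := (hf' a).integrable_mul (hg b)
  have i₃ : Integrable (fun ω => f ω a * g' ω b) P := (hf a).integrable_mul (hg' b)
  have i₄ : Integrable (fun ω => f' ω a * g' ω b) P := (hf' a).integrable_mul (hg' b)
  have i₁₂ : Integrable (fun ω => f ω a * g ω b + f' ω a * g ω b) P := i₁.add i₂
  have i₁₂₃ : Integrable (fun ω => f ω a * g ω b + f' ω a * g ω b + f ω a * g' ω b) P :=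
    i₁₂.add i₃
  simp only [secondMoment, of_apply, Matrix.add_apply, Pi.add_apply, add_mul, mul_add,
    ← add_assoc]
  rw [integral_add i₁₂₃ i₄, integral_add i₁₂ i₃, integral_add i₁ i₂]

theorem mulVec_dotProduct_mulVec {m : Type*} [Fintype m] [Fintype ι] [Fintype κ]
    (A : Matrix m ι ℝ) (B : Matrix m κ ℝ) (x : ι → ℝ) (y : κ → ℝ) :
    (A *ᵥ x) ⬝ᵥ (B *ᵥ y) = ∑ a, ∑ b, (Aᵀ * B) a b * (y b * x a) := by
  simp only [dotProduct, mulVec, mul_apply, transpose_apply, Finset.sum_mul, Finset.mul_sum]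
  rw [Finset.sum_congr rfl fun r _ => Finset.sum_comm, Finset.sum_comm]
  refine Finset.sum_congr rfl fun a _ => ?_
  rw [Finset.sum_comm]
  exact Finset.sum_congr rfl fun b _ => Finset.sum_congr rfl fun r _ => by ring

variable {m : Type*} [Fintype m] [Fintype ι] [Fintype κ] {f : Ω → ι → ℝ} {g : Ω → κ → ℝ}

theorem integrable_mulVec_dotProduct_mulVec (A : Matrix m ι ℝ) (B : Matrix m κ ℝ)
    (hf : ∀ a, MemLp (fun ω => f ω a) 2 P) (hg : ∀ b, MemLp (fun ω => g ω b) 2 P) :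
    Integrable (fun ω => (A *ᵥ f ω) ⬝ᵥ (B *ᵥ g ω)) P := by
  simp only [mulVec_dotProduct_mulVec]
  exact integrable_finsetSum _ fun a _ => integrable_finsetSum _ fun b _ =>
    ((hg b).integrable_mul (hf a)).const_mul _

theorem integral_mulVec_dotProduct_mulVec (A : Matrix m ι ℝ) (B : Matrix m κ ℝ)
    (hf : ∀ a, MemLp (fun ω => f ω a) 2 P) (hg : ∀ b, MemLp (fun ω => g ω b) 2 P) :
    ∫ ω, (A *ᵥ f ω) ⬝ᵥ (B *ᵥ g ω) ∂P = (Aᵀ * B * secondMoment P g f).trace := by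
  have hgf : ∀ a b, Integrable (fun ω => g ω b * f ω a) P :=
    fun a b => (hg b).integrable_mul (hf a)
  simp only [mulVec_dotProduct_mulVec]
  refine (integral_finsetSum _ fun a _ => integrable_finsetSum _ fun b _ =>
    (hgf a b).const_mul _).trans (Finset.sum_congr rfl fun a _ => ?_)
  refine (integral_finsetSum _ fun b _ => (hgf a b).const_mul _).trans
    (Finset.sum_congr rfl fun b _ => ?_)
  rw [integral_const_mul]
  rfl

theorem integral_dotProduct_self_add (A : Matrix m ι ℝ) (B : Matrix m κ ℝ)
    (hf : ∀ a, MemLp (fun ω => f ω a) 2 P) (hg : ∀ b, MemLp (fun ω => g ω b) 2 P) :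
    ∫ ω, (A *ᵥ f ω + B *ᵥ g ω) ⬝ᵥ (A *ᵥ f ω + B *ᵥ g ω) ∂P
      = (Aᵀ * A * secondMoment P f f).trace + 2 * (Bᵀ * A * secondMoment P f g).trace
        + (Bᵀ * B * secondMoment P g g).trace := by
  have expand : ∀ ω, (A *ᵥ f ω + B *ᵥ g ω) ⬝ᵥ (A *ᵥ f ω + B *ᵥ g ω)
      = (A *ᵥ f ω) ⬝ᵥ (A *ᵥ f ω) + 2 * (B *ᵥ g ω) ⬝ᵥ (A *ᵥ f ω)
        + (B *ᵥ g ω) ⬝ᵥ (B *ᵥ g ω) := fun ω => by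
    simp only [add_dotProduct, dotProduct_add, dotProduct_comm (A *ᵥ f ω) (B *ᵥ g ω)]
    ring
  have iAA := integrable_mulVec_dotProduct_mulVec A A hf hf
  have iBA := integrable_mulVec_dotProduct_mulVec B A hg hf
  have iBB := integrable_mulVec_dotProduct_mulVec B B hg hg
  simp only [expand]
  rw [integral_add _ iBB, integral_add iAA (iBA.const_mul 2), integral_const_mul,
    integral_mulVec_dotProduct_mulVec A A hf hf, integral_mulVec_dotProduct_mulVec B A hg hf,
    integral_mulVec_dotProduct_mulVec B B hg hg]
  exact iAA.add (iBA.const_mul 2)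

end SecondMoment

section Noise

variable {Ω ι κ r : Type*} [MeasurableSpace Ω] {P : Measure Ω} [Fintype r]

theorem memLp_dotProduct {p : ENNReal} {x : Ω → r → ℝ} (hx : ∀ c, MemLp (fun ω => x ω c) p P)
    (θ : r → ℝ) : MemLp (fun ω => x ω ⬝ᵥ θ) p P :=
  memLp_finsetSum _ fun c _ => (hx c).mul_const (θ c)

theorem integral_dotProduct_eq_zero {x : Ω → r → ℝ} (hx : ∀ c, Integrable (fun ω => x ω c) P)
    (hx₀ : ∀ c, ∫ ω, x ω c ∂P = 0) (θ : r → ℝ) : ∫ ω, x ω ⬝ᵥ θ ∂P = 0 := by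
  simp only [dotProduct]
  rw [integral_finsetSum _ fun c _ => (hx c).mul_const (θ c)]
  simp [integral_mul_const, hx₀]

theorem integral_dotProduct_mul_dotProduct {x : Ω → r → ℝ} {S : Matrix r r ℝ}
    (hx : ∀ c, MemLp (fun ω => x ω c) 2 P) (hS : ∀ c d, ∫ ω, x ω c * x ω d ∂P = S c d)
    (θ θ' : r → ℝ) : ∫ ω, (x ω ⬝ᵥ θ) * (x ω ⬝ᵥ θ') ∂P = θ ⬝ᵥ S *ᵥ θ' := by
  have hxx : ∀ c d, Integrable (fun ω => x ω c * x ω d) P :=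
    fun c d => (hx c).integrable_mul (hx d)
  have expand : ∀ ω, (x ω ⬝ᵥ θ) * (x ω ⬝ᵥ θ') = ∑ c, ∑ d, θ c * θ' d * (x ω c * x ω d) :=
    fun ω => by
      simp only [dotProduct, Finset.sum_mul_sum]
      exact Finset.sum_congr rfl fun c _ => Finset.sum_congr rfl fun d _ => by ring
  simp only [expand]
  rw [integral_finsetSum _ fun c _ => integrable_finsetSum _ fun d _ => (hxx c d).const_mul _]
  simp only [dotProduct, mulVec, Finset.mul_sum]
  refine Finset.sum_congr rfl fun c _ => ?_
  rw [integral_finsetSum _ fun d _ => (hxx c d).const_mul _]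
  refine Finset.sum_congr rfl fun d _ => ?_
  rw [integral_const_mul, hS]
  ring

theorem integral_mul_eq_zero_of_indepFun {f g : Ω → ℝ} (hfg : IndepFun f g P)
    (hf : AEStronglyMeasurable f P) (hg : AEStronglyMeasurable g P) (hf₀ : ∫ ω, f ω ∂P = 0) :
    ∫ ω, f ω * g ω ∂P = 0 := by
  rw [hfg.integral_fun_mul_eq_mul_integral hf hg, hf₀, zero_mul]

theorem secondMoment_eq_zero_of_indepFun {f : Ω → ι → ℝ} {g : Ω → κ → ℝ}
    (hfg : IndepFun f g P) (hf : ∀ a, AEStronglyMeasurable (fun ω => f ω a) P)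
    (hg : ∀ b, AEStronglyMeasurable (fun ω => g ω b) P) (hf₀ : ∀ a, ∫ ω, f ω a ∂P = 0) :
    secondMoment P f g = 0 := by
  ext a b
  exact integral_mul_eq_zero_of_indepFun
    (hfg.comp (measurable_pi_apply a) (measurable_pi_apply b)) (hf a) (hg b) (hf₀ a)

variable [IsFiniteMeasure P] [DecidableEq ι] [DecidableEq κ] {W : ι → Ω → κ → r → ℝ}
  {C : ι → Matrix r r ℝ}

theorem secondMoment_mulVec_of_iIndepFun (hL2 : ∀ m a c, MemLp (fun ω => W m ω a c) 2 P)
    (hrows : ∀ m, iIndepFun (fun a ω => W m ω a) P)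
    (hmean : ∀ m a c, ∫ ω, W m ω a c ∂P = 0)
    (hcov : ∀ m a c d, ∫ ω, W m ω a c * W m ω a d ∂P = C m c d)
    (hindep : iIndepFun W P) (θ : ι → r → ℝ) (m m' : ι) :
    secondMoment P (fun ω => of (W m ω) *ᵥ θ m) (fun ω => of (W m' ω) *ᵥ θ m')
      = if m = m' then (θ m ⬝ᵥ C m *ᵥ θ m) • 1 else 0 := by
  have hu : ∀ m a, MemLp (fun ω => W m ω a ⬝ᵥ θ m) 2 P :=
    fun m a => memLp_dotProduct (hL2 m a) (θ m)
  have hu₀ : ∀ m a, ∫ ω, W m ω a ⬝ᵥ θ m ∂P = 0 := fun m a =>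
    integral_dotProduct_eq_zero (fun c => (hL2 m a c).integrable one_le_two) (hmean m a) (θ m)
  split_ifs with hmm
  · subst hmm
    ext a b
    simp only [secondMoment, of_apply, Matrix.smul_apply, one_apply, smul_eq_mul]
    split_ifs with hab
    · subst hab
      rw [mul_one]
      exact integral_dotProduct_mul_dotProduct (hL2 m a) (hcov m a) (θ m) (θ m)
    · rw [mul_zero]
      exact integral_mul_eq_zero_of_indepFun (((hrows m).indepFun hab).comp
        (φ := fun v => v ⬝ᵥ θ m) (ψ := fun v => v ⬝ᵥ θ m) (by fun_prop) (by fun_prop))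
        (hu m a).aestronglyMeasurable (hu m b).aestronglyMeasurable (hu₀ m a)
  · exact secondMoment_eq_zero_of_indepFun ((hindep.indepFun hmm).comp
      (φ := fun (x : κ → r → ℝ) a => x a ⬝ᵥ θ m)
      (ψ := fun (x : κ → r → ℝ) b => x b ⬝ᵥ θ m') (by fun_prop) (by fun_prop))
      (fun a => (hu m a).aestronglyMeasurable) (fun b => (hu m' b).aestronglyMeasurable) (hu₀ m)

theorem secondMoment_mulVec_add_of_indepFun {ε : ι → Ω → κ → ℝ} {S : ι → ι → Matrix κ κ ℝ}
    (hWL2 : ∀ m a c, MemLp (fun ω => W m ω a c) 2 P)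
    (hrows : ∀ m, iIndepFun (fun a ω => W m ω a) P)
    (hWmean : ∀ m a c, ∫ ω, W m ω a c ∂P = 0)
    (hWcov : ∀ m a c d, ∫ ω, W m ω a c * W m ω a d ∂P = C m c d)
    (hWindep : iIndepFun W P)
    (hWε : IndepFun (fun ω m => W m ω) (fun ω m => ε m ω) P)
    (hεL2 : ∀ m a, MemLp (fun ω => ε m ω a) 2 P)
    (hεcov : ∀ m m' a b, ∫ ω, ε m ω a * ε m' ω b ∂P = S m m' a b) (θ : ι → r → ℝ) (m m' : ι) :
    secondMoment P (fun ω => of (W m ω) *ᵥ θ m + ε m ω) (fun ω => of (W m' ω) *ᵥ θ m' + ε m' ω)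
      = (if m = m' then (θ m ⬝ᵥ C m *ᵥ θ m) • 1 else 0) + S m m' := by
  have hWθ : ∀ m a, MemLp (fun ω => (of (W m ω) *ᵥ θ m) a) 2 P :=
    fun m a => memLp_dotProduct (hWL2 m a) (θ m)
  have hWθε : ∀ m m', secondMoment P (fun ω => of (W m ω) *ᵥ θ m) (ε m') = 0 := fun m m' =>
    secondMoment_eq_zero_of_indepFun (hWε.comp
      (φ := fun (x : ι → κ → r → ℝ) a => x m a ⬝ᵥ θ m)
      (ψ := fun (x : ι → κ → ℝ) => x m') (by fun_prop) (by fun_prop))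
      (fun a => (hWθ m a).aestronglyMeasurable) (fun b => (hεL2 m' b).aestronglyMeasurable)
      (fun a => integral_dotProduct_eq_zero (fun c => (hWL2 m a c).integrable one_le_two)
        (hWmean m a) (θ m))
  rw [secondMoment_add_add (hWθ m) (hεL2 m) (hWθ m') (hεL2 m'),
    secondMoment_mulVec_of_iIndepFun hWL2 hrows hWmean hWcov hWindep θ m m',
    hWθε m m', ← secondMoment_transpose, hWθε m' m, transpose_zero, add_zero, add_zero]
  congr 1
  ext a b
  exact hεcov m m' a b

end Noise

theorem training_error_difference_expectation_general {n p : ℕ}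
    {Ω : Type*} [MeasurableSpace Ω] (P : Measure Ω) [IsProbabilityMeasure P]
    (X : Fin 2 → Matrix (Fin n) (Fin p) ℝ)
    (hXm : ∀ m, IsUnit ((X m)ᵀ * X m))
    (hX : IsUnit ((fromCols (X 0) (X 1))ᵀ * fromCols (X 0) (X 1)))
    (β θ : Fin 2 → Fin p → ℝ)
    (W : Fin 2 → Ω → Fin n → Fin p → ℝ)
    (ε : Fin 2 → Ω → Fin n → ℝ)
    (Sig : Fin 2 → Fin 2 → Matrix (Fin n) (Fin n) ℝ)
    (SigW : Fin 2 → Matrix (Fin p) (Fin p) ℝ)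
    (hWL2 : ∀ m i j, MemLp (fun ω => W m ω i j) 2 P)
    (hWrowIndep : ∀ m, iIndepFun
      (fun i : Fin n => fun ω => W m ω i) P)
    (hWmean : ∀ m i j, ∫ ω, W m ω i j ∂P = 0)
    (hWrowCov : ∀ m i a b, ∫ ω, W m ω i a * W m ω i b ∂P = SigW m a b)
    (hWindep : iIndepFun W P)
    (hWε : IndepFun (fun ω => fun m => W m ω) (fun ω => fun m => ε m ω) P)
    (hεL2 : ∀ m i, MemLp (fun ω => ε m ω i) 2 P)
    (hcov : ∀ m m' i j, ∫ ω, ε m ω i * ε m' ω j ∂P = Sig m m' i j) :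
    let y : Fin 2 → Ω → Fin n → ℝ :=
      fun m ω => (X m).mulVec (β m) + (Matrix.of (W m ω)).mulVec (θ m) + ε m ω
    let H := hatMat (fromCols (X 0) (X 1))
    let H₁ := hatMat (X 0)
    let H₂ := hatMat (X 1)
    let yhat : Ω → Fin n → ℝ := fun ω => H.mulVec (y 0 ω + y 1 ω)
    let yhatStar : Ω → Fin n → ℝ := fun ω => H₁.mulVec (y 0 ω) + H₂.mulVec (y 1 ω)
    (∫ ω, ((y 0 ω + y 1 ω) - yhat ω) ⬝ᵥ ((y 0 ω + y 1 ω) - yhat ω) ∂P)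
      - (∫ ω, ((y 0 ω + y 1 ω) - yhatStar ω) ⬝ᵥ ((y 0 ω + y 1 ω) - yhatStar ω) ∂P)
      = Matrix.trace ((H₁ - H) * Sig 0 0) + Matrix.trace ((H₂ - H) * Sig 1 1)
        + 2 * Matrix.trace ((H₁ + H₂ - H) * Sig 0 1)
        - 2 * Matrix.trace (H₂ * H₁ * Sig 0 1)
        - (p : ℝ) * (θ 0 ⬝ᵥ (SigW 0).mulVec (θ 0))
        - (p : ℝ) * (θ 1 ⬝ᵥ (SigW 1).mulVec (θ 1)) := by
  intro y H H₁ H₂ yhat yhatStar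
  have hy : ∀ m ω, y m ω = X m *ᵥ β m + (of (W m ω) *ᵥ θ m + ε m ω) :=
    fun m ω => add_assoc _ _ _
  have hzL2 : ∀ m a, MemLp (fun ω => (of (W m ω) *ᵥ θ m + ε m ω) a) 2 P :=
    fun m a => (memLp_dotProduct (hWL2 m a) (θ m)).add (hεL2 m a)
  have hmoment := secondMoment_mulVec_add_of_indepFun hWL2 hWrowIndep hWmean hWrowCov hWindep
    hWε hεL2 hcov θ
  simp only [yhat, yhatStar, hy, H, H₁, H₂,
    add_add_sub_mulVec_of_mul_fromCols_eq (hatMat_mul_self hX),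
    add_add_sub_mulVec_add_mulVec_of_mul_eq (hatMat_mul_self (hXm 0)) (hatMat_mul_self (hXm 1))]
  rw [integral_dotProduct_self_add _ _ (hzL2 0) (hzL2 1),
    integral_dotProduct_self_add _ _ (hzL2 0) (hzL2 1), hmoment, hmoment, hmoment]
  simp only [↓reduceIte, Fin.isValue, Fin.reduceEq, zero_add]
  rw [trace_residual_forms_sub (hXm 0) (hXm 1) hX]

/-- **Proposition 2.** The expected difference in training error between AVR and IR. -/
theorem training_error_difference_expectation {n p : ℕ}
    {Ω : Type*} [MeasurableSpace Ω] (P : Measure Ω) [IsProbabilityMeasure P]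
    (X : Fin 2 → Matrix (Fin n) (Fin p) ℝ)
    (hXm : ∀ m, IsUnit ((X m)ᵀ * X m))
    (hX : IsUnit ((fromCols (X 0) (X 1))ᵀ * fromCols (X 0) (X 1)))
    (β θ : Fin 2 → Fin p → ℝ)
    (W : Fin 2 → Ω → Fin n → Fin p → ℝ)
    (ε : Fin 2 → Ω → Fin n → ℝ)
    (Sig : Fin 2 → Fin 2 → Matrix (Fin n) (Fin n) ℝ)
    (SigW : Fin 2 → Matrix (Fin p) (Fin p) ℝ)
    (hWL2 : ∀ m i j, MemLp (fun ω => W m ω i j) 2 P)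
    (hWrowIndep : ∀ m, iIndepFun
      (fun i : Fin n => fun ω => W m ω i) P)
    (hWmean : ∀ m i j, ∫ ω, W m ω i j ∂P = 0)
    (hWrowCov : ∀ m i a b, ∫ ω, W m ω i a * W m ω i b ∂P = SigW m a b)
    (hWindep : iIndepFun W P)
    (hWε : IndepFun (fun ω => fun m => W m ω) (fun ω => fun m => ε m ω) P)
    (hεL2 : ∀ m i, MemLp (fun ω => ε m ω i) 2 P)
    (hεmean : ∀ m i, ∫ ω, ε m ω i ∂P = 0)
    (hcov : ∀ m m' i j, ∫ ω, ε m ω i * ε m' ω j ∂P = Sig m m' i j) :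
    let y : Fin 2 → Ω → Fin n → ℝ :=
      fun m ω => (X m).mulVec (β m) + (Matrix.of (W m ω)).mulVec (θ m) + ε m ω
    let H := hatMat (fromCols (X 0) (X 1))
    let H₁ := hatMat (X 0)
    let H₂ := hatMat (X 1)
    let yhat : Ω → Fin n → ℝ := fun ω => H.mulVec (y 0 ω + y 1 ω)
    let yhatStar : Ω → Fin n → ℝ := fun ω => H₁.mulVec (y 0 ω) + H₂.mulVec (y 1 ω)
    (∫ ω, ((y 0 ω + y 1 ω) - yhat ω) ⬝ᵥ ((y 0 ω + y 1 ω) - yhat ω) ∂P)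
      - (∫ ω, ((y 0 ω + y 1 ω) - yhatStar ω) ⬝ᵥ ((y 0 ω + y 1 ω) - yhatStar ω) ∂P)
      = Matrix.trace ((H₁ - H) * Sig 0 0) + Matrix.trace ((H₂ - H) * Sig 1 1)
        + 2 * Matrix.trace ((H₁ + H₂ - H) * Sig 0 1)
        - 2 * Matrix.trace (H₂ * H₁ * Sig 0 1)
        - (p : ℝ) * (θ 0 ⬝ᵥ (SigW 0).mulVec (θ 0))
        - (p : ℝ) * (θ 1 ⬝ᵥ (SigW 1).mulVec (θ 1)) :=
  training_error_difference_expectation_general P X hXm hX β θ W ε Sig SigW hWL2 hWrowIndep hWmean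
    hWrowCov hWindep hWε hεL2 hcov
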